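/- arXiv:cs/0505012 — 2 statements merged into one kernel-verified Lean document; each statement's English description precedes it below -/
import Mathlib

section
/- For jointly distributed finite random variables U, W, Y with V a function of (W,Y): H(U|W) ≤ H(U|V) + H(Y) - H(Y|W,U). -/
open MeasureTheory ProbabilityTheory Real

/-- Shannon entropy (in bits) of a finite-valued random variable. -/
noncomputable def ent {Ω S : Type*} [MeasurableSpace Ω] [Fintype S]
    (μ : Measure Ω) (X : Ω → S) : ℝ :=
  ∑ s : S, -((μ (X ⁻¹' {s})).toReal * Real.logb 2 (μ (X ⁻¹' {s})).toReal)

/-- Conditional Shannon entropy H(X|Y) = H(X,Y) - H(Y). -/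
noncomputable def condEnt {Ω S T : Type*} [MeasurableSpace Ω] [Fintype S] [Fintype T]
    (μ : Measure Ω) (X : Ω → S) (Y : Ω → T) : ℝ :=
  ent μ (fun ω => (X ω, Y ω)) - ent μ Y

/-- Mutual information I(X;Y) = H(X) + H(Y) - H(X,Y). -/
noncomputable def mutInf {Ω S T : Type*} [MeasurableSpace Ω] [Fintype S] [Fintype T]
    (μ : Measure Ω) (X : Ω → S) (Y : Ω → T) : ℝ :=
  ent μ X + ent μ Y - ent μ (fun ω => (X ω, Y ω))

/-- Conditional mutual information I(X;Y|Z) = H(X|Z) - H(X|Y,Z). -/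
noncomputable def condMutInf {Ω S T R : Type*} [MeasurableSpace Ω] [Fintype S] [Fintype T]
    [Fintype R] (μ : Measure Ω) (X : Ω → S) (Y : Ω → T) (Z : Ω → R) : ℝ :=
  condEnt μ X Z - condEnt μ X (fun ω => (Y ω, Z ω))

/-- `Y` is conditionally independent of `Z` given `X` (elementwise form). -/
def CondIndepGiven {Ω A B C : Type*} [MeasurableSpace Ω]
    (μ : Measure Ω) (Y : Ω → A) (Z : Ω → B) (X : Ω → C) : Prop :=
  ∀ (a : A) (b : B) (c : C),
    μ {ω | Y ω = a ∧ Z ω = b ∧ X ω = c} * μ {ω | X ω = c} =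
      μ {ω | Y ω = a ∧ X ω = c} * μ {ω | Z ω = b ∧ X ω = c}

noncomputable def phiH (x : ℝ) : ℝ := -(x * Real.logb 2 x)

lemma ent_eq_phiH {Ω S : Type*} [MeasurableSpace Ω] [Fintype S]
    (μ : Measure Ω) (X : Ω → S) :
    ent μ X = ∑ s : S, phiH ((μ (X ⁻¹' {s})).toReal) := rfl

@[simp] lemma phiH_zero : phiH 0 = 0 := by simp [phiH]

lemma phiH_eq (x : ℝ) : phiH x = -(x * Real.log x) / Real.log 2 := by
  rw [phiH, Real.logb]; ring

/-- Entropy is invariant under composition with an injection. -/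
lemma ent_comp_inj {Ω S T : Type*} [MeasurableSpace Ω] [Fintype S] [Fintype T]
    (μ : Measure Ω) (X : Ω → S) (g : S → T) (hg : Function.Injective g) :
    ent μ (fun ω => g (X ω)) = ent μ X := by
  classical
  rw [ent_eq_phiH, ent_eq_phiH]
  rw [← Finset.sum_subset (Finset.subset_univ (Finset.univ.image g))]
  · rw [Finset.sum_image (fun a _ b _ h => hg h)]
    refine Finset.sum_congr rfl fun s _ => ?_
    have : (fun ω => g (X ω)) ⁻¹' {g s} = X ⁻¹' {s} := by
      ext ω; simp [hg.eq_iff]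
    rw [this]
  · intro t _ ht
    have : (fun ω => g (X ω)) ⁻¹' {t} = ∅ := by
      ext ω
      simp only [Set.mem_preimage, Set.mem_singleton_iff, Set.mem_empty_iff_false, iff_false]
      intro h
      exact ht (Finset.mem_image.2 ⟨X ω, Finset.mem_univ _, h⟩)
    simp [this]

lemma toReal_measure_biUnion {Ω ι : Type*} [MeasurableSpace Ω] (μ : Measure Ω)
    [IsProbabilityMeasure μ] (A : Finset ι) (f : ι → Set Ω)
    (hm : ∀ i ∈ A, MeasurableSet (f i)) (hd : (A : Set ι).PairwiseDisjoint f) :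
    (μ (⋃ i ∈ A, f i)).toReal = ∑ i ∈ A, (μ (f i)).toReal := by
  rw [measure_biUnion_finset hd hm, ENNReal.toReal_sum (fun i _ => measure_ne_top μ _)]

lemma preimage_pairwiseDisjoint {Ω S ι : Type*} (F : Ω → S) (e : ι → S)
    (he : Function.Injective e) (A : Set ι) :
    A.PairwiseDisjoint (fun i => F ⁻¹' {e i}) := by
  intro i _ j _ hij
  rw [Function.onFun, Set.disjoint_left]
  intro ω h1 h2
  simp only [Set.mem_preimage, Set.mem_singleton_iff] at h1 h2
  exact hij (he (h1.symm.trans h2))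

section CoreSection
open Real Finset

/-- pointwise Gibbs-type bound -/
lemma gibbs_pt {p q r m : ℝ} (hp : 0 ≤ p) (hq : p ≤ q) (hr : p ≤ r) (hqm : q ≤ m) :
    p * Real.log q + p * Real.log r - p * Real.log p - p * Real.log m ≤ q * r / m - p := by
  rcases eq_or_lt_of_le hp with h0 | hp'
  · rw [← h0]
    simp only [zero_mul, sub_zero, add_zero, zero_add, sub_zero]
    have hq0 : (0:ℝ) ≤ q := h0 ▸ hq
    have hr0 : (0:ℝ) ≤ r := h0 ▸ hr
    have hm0 : (0:ℝ) ≤ m := le_trans hq0 hqm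
    positivity
  · have hq' : 0 < q := lt_of_lt_of_le hp' hq
    have hr' : 0 < r := lt_of_lt_of_le hp' hr
    have hm' : 0 < m := lt_of_lt_of_le hq' hqm
    have hpos : 0 < q * r / (p * m) := by positivity
    have hlog := Real.log_le_sub_one_of_pos hpos
    rw [Real.log_div (by positivity) (by positivity),
        Real.log_mul (ne_of_gt hq') (ne_of_gt hr'),
        Real.log_mul (ne_of_gt hp') (ne_of_gt hm')] at hlog
    have h2 := mul_le_mul_of_nonneg_left hlog (le_of_lt hp')
    have h3 : p * (q * r / (p * m) - 1) = q * r / m - p := by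
      field_simp
    rw [h3] at h2
    calc p * Real.log q + p * Real.log r - p * Real.log p - p * Real.log m
        = p * (Real.log q + Real.log r - (Real.log p + Real.log m)) := by ring
      _ ≤ q * r / m - p := h2

/-- Core log-sum / data-processing inequality for conditional entropy sums. -/
lemma core_ineq {S T R : Type*} [Fintype S] [Fintype T] [Fintype R] [DecidableEq R]
    (g : T → R) (p : S → T → ℝ) (hp : ∀ s t, 0 ≤ p s t) :
    (∑ t, (∑ s, p s t) * Real.log (∑ s, p s t))
      + (∑ s, ∑ ρ, (∑ t ∈ univ.filter (fun t => g t = ρ), p s t)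
            * Real.log (∑ t ∈ univ.filter (fun t => g t = ρ), p s t))
      - (∑ s, ∑ t, p s t * Real.log (p s t))
      - (∑ ρ, (∑ t ∈ univ.filter (fun t => g t = ρ), ∑ s, p s t)
            * Real.log (∑ t ∈ univ.filter (fun t => g t = ρ), ∑ s, p s t)) ≤ 0 := by
  set q : T → ℝ := fun t => ∑ s, p s t with hq
  set rr : S → R → ℝ := fun s ρ => ∑ t ∈ univ.filter (fun t => g t = ρ), p s t with hrr
  set m : R → ℝ := fun ρ => ∑ t ∈ univ.filter (fun t => g t = ρ), q t with hm
  have hq0 : ∀ t, 0 ≤ q t := fun t => Finset.sum_nonneg fun s _ => hp s t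
  have hrr0 : ∀ s ρ, 0 ≤ rr s ρ := fun s ρ => Finset.sum_nonneg fun t _ => hp s t
  have hm0 : ∀ ρ, 0 ≤ m ρ := fun ρ => Finset.sum_nonneg fun t _ => hq0 t
  have hpq : ∀ s t, p s t ≤ q t := fun s t =>
    Finset.single_le_sum (fun s' _ => hp s' t) (mem_univ s)
  have hprr : ∀ s t, p s t ≤ rr s (g t) := fun s t =>
    Finset.single_le_sum (f := fun t' => p s t') (fun t' _ => hp s t')
      (by simp)
  have hqm : ∀ t, q t ≤ m (g t) := fun t =>
    Finset.single_le_sum (f := q) (fun t' _ => hq0 t') (by simp)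
  have hsumrr : ∀ ρ, ∑ s, rr s ρ = m ρ := by
    intro ρ
    simp only [hrr, hm, hq]
    exact Finset.sum_comm
  -- identity I1
  have I1 : ∑ t, q t * Real.log (q t) = ∑ s, ∑ t, p s t * Real.log (q t) := by
    rw [Finset.sum_comm]
    exact Finset.sum_congr rfl fun t _ => by rw [hq, Finset.sum_mul]
  -- identity I2
  have I2 : ∀ s, ∑ ρ, rr s ρ * Real.log (rr s ρ) = ∑ t, p s t * Real.log (rr s (g t)) := by
    intro s
    rw [← Finset.sum_fiberwise univ g (fun t => p s t * Real.log (rr s (g t)))]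
    refine Finset.sum_congr rfl fun ρ _ => ?_
    rw [hrr, Finset.sum_mul]
    refine Finset.sum_congr rfl fun t ht => ?_
    have : g t = ρ := (Finset.mem_filter.1 ht).2
    rw [this]
  -- identity I3
  have I3 : ∑ ρ, m ρ * Real.log (m ρ) = ∑ s, ∑ t, p s t * Real.log (m (g t)) := by
    have h1 : ∑ ρ, m ρ * Real.log (m ρ) = ∑ t, q t * Real.log (m (g t)) := by
      rw [← Finset.sum_fiberwise univ g (fun t => q t * Real.log (m (g t)))]
      refine Finset.sum_congr rfl fun ρ _ => ?_
      rw [hm, Finset.sum_mul]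
      refine Finset.sum_congr rfl fun t ht => ?_
      have : g t = ρ := (Finset.mem_filter.1 ht).2
      rw [this]
    rw [h1, Finset.sum_comm]
    exact Finset.sum_congr rfl fun t _ => by rw [hq, Finset.sum_mul]
  rw [I1, I3]
  have I2' : ∑ s, ∑ ρ, rr s ρ * Real.log (rr s ρ)
      = ∑ s, ∑ t, p s t * Real.log (rr s (g t)) :=
    Finset.sum_congr rfl fun s _ => I2 s
  rw [I2']
  have key : ∑ s, ∑ t, (p s t * Real.log (q t) + p s t * Real.log (rr s (g t))
      - p s t * Real.log (p s t) - p s t * Real.log (m (g t)))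
      ≤ ∑ s, ∑ t, (q t * rr s (g t) / m (g t) - p s t) := by
    refine Finset.sum_le_sum fun s _ => Finset.sum_le_sum fun t _ => ?_
    exact gibbs_pt (hp s t) (hpq s t) (hprr s t) (hqm t)
  have hbt : ∀ t, ∑ s, q t * rr s (g t) / m (g t) = q t := by
    intro t
    have h1 : ∀ s, q t * rr s (g t) / m (g t) = (q t / m (g t)) * rr s (g t) := fun s => by
      ring
    rw [Finset.sum_congr rfl (fun s _ => h1 s), ← Finset.mul_sum, hsumrr]
    rcases eq_or_lt_of_le (hm0 (g t)) with h0 | hpos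
    · have hq00 : q t = 0 := le_antisymm (h0 ▸ hqm t) (hq0 t)
      rw [hq00]
      simp
    · rw [div_mul_cancel₀ _ (ne_of_gt hpos)]
  have hb : ∑ s, ∑ t, q t * rr s (g t) / m (g t) = ∑ s, ∑ t, p s t :=
    calc ∑ s, ∑ t, q t * rr s (g t) / m (g t)
        = ∑ t, ∑ s, q t * rr s (g t) / m (g t) := Finset.sum_comm
      _ = ∑ t, q t := Finset.sum_congr rfl fun t _ => hbt t
      _ = ∑ t, ∑ s, p s t := rfl
      _ = ∑ s, ∑ t, p s t := Finset.sum_comm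
  have expand : ∑ s, ∑ t, (p s t * Real.log (q t) + p s t * Real.log (rr s (g t))
      - p s t * Real.log (p s t) - p s t * Real.log (m (g t)))
      = (∑ s, ∑ t, p s t * Real.log (q t)) + (∑ s, ∑ t, p s t * Real.log (rr s (g t)))
        - (∑ s, ∑ t, p s t * Real.log (p s t)) - (∑ s, ∑ t, p s t * Real.log (m (g t))) := by
    simp [Finset.sum_add_distrib, Finset.sum_sub_distrib]
  have expand2 : ∑ s, ∑ t, (q t * rr s (g t) / m (g t) - p s t)
      = (∑ s, ∑ t, q t * rr s (g t) / m (g t)) - ∑ s, ∑ t, p s t := by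
    simp [Finset.sum_sub_distrib]
  rw [expand, expand2, hb] at key
  linarith

end CoreSection

open Finset in
lemma condEnt_comp_le {Ω S T R : Type*} [MeasurableSpace Ω]
    [Fintype S] [MeasurableSpace S] [MeasurableSingletonClass S]
    [Fintype T] [MeasurableSpace T] [MeasurableSingletonClass T]
    [Fintype R]
    (μ : Measure Ω) [IsProbabilityMeasure μ]
    (X : Ω → S) (Z : Ω → T) (hX : Measurable X) (hZ : Measurable Z) (g : T → R) :
    condEnt μ X Z ≤ condEnt μ X (fun ω => g (Z ω)) := by
  classical
  set p : S → T → ℝ := fun s t => (μ ((fun ω => (X ω, Z ω)) ⁻¹' {(s, t)})).toReal with hpdef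
  have hps : ∀ s t, (μ ((fun ω => (X ω, Z ω)) ⁻¹' {(s, t)})).toReal = p s t := fun _ _ => rfl
  have hmes : ∀ s t, MeasurableSet ((fun ω => (X ω, Z ω)) ⁻¹' {(s, t)}) := by
    intro s t
    have hset : (fun ω => (X ω, Z ω)) ⁻¹' {(s, t)} = X ⁻¹' {s} ∩ Z ⁻¹' {t} := by
      ext ω; simp [Prod.ext_iff]
    rw [hset]
    exact (hX (measurableSet_singleton s)).inter (hZ (measurableSet_singleton t))
  have hp0 : ∀ s t, 0 ≤ p s t := fun s t => ENNReal.toReal_nonneg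
  have F1 : ∀ t, (μ (Z ⁻¹' {t})).toReal = ∑ s, p s t := by
    intro t
    have hset : Z ⁻¹' {t}
        = ⋃ s ∈ (Finset.univ : Finset S), (fun ω => (X ω, Z ω)) ⁻¹' {(s, t)} := by
      ext ω
      simp only [Set.mem_preimage, Set.mem_singleton_iff, Set.mem_iUnion, Finset.mem_univ,
        true_and, Prod.mk.injEq]
      clear hpdef hps hmes hp0
      aesop
    rw [hset, toReal_measure_biUnion μ _ _ (fun s _ => hmes s t)
        (preimage_pairwiseDisjoint _ (fun s : S => ((s, t) : S × T))
          (fun a b h => (Prod.ext_iff.1 h).1) _)]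
  have F2 : ∀ s ρ, (μ ((fun ω => (X ω, g (Z ω))) ⁻¹' {(s, ρ)})).toReal
      = ∑ t ∈ Finset.univ.filter (fun t => g t = ρ), p s t := by
    intro s ρ
    have hset : (fun ω => (X ω, g (Z ω))) ⁻¹' {(s, ρ)}
        = ⋃ t ∈ Finset.univ.filter (fun t => g t = ρ), (fun ω => (X ω, Z ω)) ⁻¹' {(s, t)} := by
      ext ω
      simp only [Set.mem_preimage, Set.mem_singleton_iff, Set.mem_iUnion, Finset.mem_filter,
        Finset.mem_univ, true_and, Prod.mk.injEq]
      clear hpdef hps hmes hp0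
      aesop
    rw [hset, toReal_measure_biUnion μ _ _ (fun t _ => hmes s t)
        (preimage_pairwiseDisjoint _ (fun t : T => ((s, t) : S × T))
          (fun a b h => (Prod.ext_iff.1 h).2) _)]
  have F3 : ∀ ρ, (μ ((fun ω => g (Z ω)) ⁻¹' {ρ})).toReal
      = ∑ t ∈ Finset.univ.filter (fun t => g t = ρ), ∑ s, p s t := by
    intro ρ
    have hset : (fun ω => g (Z ω)) ⁻¹' {ρ}
        = ⋃ t ∈ Finset.univ.filter (fun t => g t = ρ), Z ⁻¹' {t} := by
      ext ω
      simp only [Set.mem_preimage, Set.mem_singleton_iff, Set.mem_iUnion, Finset.mem_filter,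
        Finset.mem_univ, true_and]
      clear hpdef hps hmes hp0
      aesop
    rw [hset, toReal_measure_biUnion μ _ _ (fun t _ => hZ (measurableSet_singleton t))
        (preimage_pairwiseDisjoint Z id Function.injective_id _)]
    exact Finset.sum_congr rfl fun t _ => F1 t
  have hc : (0:ℝ) < Real.log 2 := Real.log_pos (by norm_num)
  simp only [condEnt, ent_eq_phiH]
  rw [Fintype.sum_prod_type, Fintype.sum_prod_type]
  simp only [hps, F1, F2, F3]
  simp only [phiH_eq]
  simp only [← Finset.sum_div, Finset.sum_neg_distrib]
  rw [div_sub_div_same, div_sub_div_same, div_le_div_iff_of_pos_right hc]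
  have := core_ineq g p hp0
  linarith


/-- Converse step: with V = f(W,Y), H(U|W) ≤ H(U|V) + H(Y) - H(Y|W,U). -/
theorem converse_key_step {Ω A B G E : Type*} [MeasurableSpace Ω]
    [Fintype A] [MeasurableSpace A] [MeasurableSingletonClass A]
    [Fintype B] [MeasurableSpace B] [MeasurableSingletonClass B]
    [Fintype G] [MeasurableSpace G] [MeasurableSingletonClass G]
    [Fintype E] [MeasurableSpace E] [MeasurableSingletonClass E]
    (μ : Measure Ω) [IsProbabilityMeasure μ]
    (U : Ω → A) (W : Ω → B) (Y : Ω → G) (V : Ω → E)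
    (hU : Measurable U) (hW : Measurable W) (hY : Measurable Y)
    (f : B × G → E) (hV : ∀ ω, V ω = f (W ω, Y ω)) :
    condEnt μ U W ≤ condEnt μ U V + ent μ Y - condEnt μ Y (fun ω => (W ω, U ω)) := by
  classical
  have hWY : Measurable (fun ω => (W ω, Y ω)) := hW.prodMk hY
  have e1 : ent μ (fun ω => (U ω, W ω)) = ent μ (fun ω => (W ω, U ω)) :=
    ent_comp_inj μ (fun ω => (W ω, U ω)) Prod.swap Prod.swap_injective
  have e2 : ent μ (fun ω => (Y ω, W ω)) = ent μ (fun ω => (W ω, Y ω)) :=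
    ent_comp_inj μ (fun ω => (W ω, Y ω)) Prod.swap Prod.swap_injective
  have e3 : ent μ (fun ω => (Y ω, (W ω, U ω))) = ent μ (fun ω => (U ω, (W ω, Y ω))) :=
    ent_comp_inj μ (fun ω => (U ω, (W ω, Y ω)))
      (fun x => (x.2.2, (x.2.1, x.1)))
      (fun x y h => by
        obtain ⟨h1, h2, h3⟩ : x.2.2 = y.2.2 ∧ x.2.1 = y.2.1 ∧ x.1 = y.1 := by
          simpa [Prod.ext_iff] using h
        exact Prod.ext h3 (Prod.ext h2 h1))
  -- conditioning reduces entropy: H(Y|W) ≤ H(Y)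
  have h2 : condEnt μ Y W ≤ ent μ Y := by
    have hle := condEnt_comp_le μ Y W hY hW (fun _ : B => (() : Unit))
    have eY : ent μ (fun ω => (Y ω, ())) = ent μ Y :=
      ent_comp_inj μ Y (fun y => (y, ())) (fun a b h => (Prod.ext_iff.1 h).1)
    have eC : ent μ (fun _ : Ω => ()) = 0 := by
      rw [ent_eq_phiH]
      have : ((fun _ : Ω => ()) ⁻¹' {()}) = Set.univ := by ext ω; simp
      simp [this, phiH]
    simp only [condEnt] at hle ⊢
    rw [eY, eC] at hle
    linarith
  -- H(U|(W,Y)) ≤ H(U|V)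
  have h3 : condEnt μ U (fun ω => (W ω, Y ω)) ≤ condEnt μ U V := by
    have hle := condEnt_comp_le μ U (fun ω => (W ω, Y ω)) hU hWY f
    have hVeq : V = fun ω => f (W ω, Y ω) := funext hV
    rw [hVeq]
    exact hle
  -- chain rule identity
  have hid : condEnt μ U W = condEnt μ Y W + condEnt μ U (fun ω => (W ω, Y ω))
      - condEnt μ Y (fun ω => (W ω, U ω)) := by
    simp only [condEnt]
    linarith [e1, e2, e3]
  linarith
end

section
/- For finite random variables U^N, W^m, Y^n with U^N i.i.d. and independent of Y^n: I(U^N; W^m | Y^n) ≥ Σ_{i=1}^N I(U_i; (W^m, Y^n)). -/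
open MeasureTheory ProbabilityTheory Real

/-! Write `V = (Wᵐ, Yⁿ)`. Independence of `Uᴺ` and `Yⁿ` gives
`I(Uᴺ; Wᵐ | Yⁿ) = H(Uᴺ) - H(Uᴺ | V)`, and mutual independence of the `Uᵢ` gives
`H(Uᴺ) = ∑ᵢ H(Uᵢ)`. Conditional entropy is subadditive, `H(Uᴺ | V) ≤ ∑ᵢ H(Uᵢ | V)`, so
`I(Uᴺ; Wᵐ | Yⁿ) ≥ ∑ᵢ (H(Uᵢ) - H(Uᵢ | V)) = ∑ᵢ I(Uᵢ; V)`. Subadditivity is Gibbs' inequality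
comparing the joint law `p(u, v)` of `(Uᴺ, V)` with the law `p(v) ∏ᵢ p(uᵢ | v)`, under which the
`Uᵢ` are conditionally independent given `V`. -/

open Finset

section Logb

variable {b : ℝ}

lemma mul_logb_sub_mul_logb_le (hb : 1 < b) {p q : ℝ} (hp : 0 ≤ p) (hq : 0 ≤ q)
    (hpq : p ≠ 0 → q ≠ 0) :
    p * logb b q - p * logb b p ≤ (q - p) / log b := by
  rcases hp.eq_or_lt with rfl | hp
  · simpa using div_nonneg hq (log_nonneg hb.le)
  have hq : 0 < q := hq.lt_of_ne' (hpq hp.ne')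
  rw [← mul_sub, logb, logb, ← sub_div, ← log_div hq.ne' hp.ne', mul_div_assoc']
  refine div_le_div_of_nonneg_right ?_ (log_nonneg hb.le)
  calc p * log (q / p) ≤ p * (q / p - 1) := by
        gcongr
        exact log_le_sub_one_of_pos (by positivity)
    _ = q - p := by field_simp

lemma sum_mul_logb_le_sum_mul_logb (hb : 1 < b) {ι : Type*} [Fintype ι] {p q : ι → ℝ}
    (hp : ∀ i, 0 ≤ p i) (hq : ∀ i, 0 ≤ q i) (hpq : ∀ i, p i ≠ 0 → q i ≠ 0)
    (hsum : ∑ i, q i ≤ ∑ i, p i) :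
    ∑ i, p i * logb b (q i) ≤ ∑ i, p i * logb b (p i) := by
  have h := sum_le_sum fun i (_ : i ∈ univ) => mul_logb_sub_mul_logb_le hb (hp i) (hq i) (hpq i)
  rw [sum_sub_distrib, ← sum_div, sum_sub_distrib] at h
  have : (∑ i, q i - ∑ i, p i) / log b ≤ 0 :=
    div_nonpos_of_nonpos_of_nonneg (by linarith) (log_pos hb).le
  linarith

lemma mul_logb_mul_eq_add (x y : ℝ) :
    x * y * logb b (x * y) = x * y * logb b x + x * y * logb b y := by
  rcases eq_or_ne x 0 with rfl | hx
  · simp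
  rcases eq_or_ne y 0 with rfl | hy
  · simp
  rw [logb_mul hx hy, mul_add]

lemma prod_mul_logb_prod_eq_sum {ι : Type*} (s : Finset ι) (x : ι → ℝ) :
    (∏ i ∈ s, x i) * logb b (∏ i ∈ s, x i) =
      ∑ i ∈ s, (∏ j ∈ s, x j) * logb b (x i) := by
  by_cases hx : ∀ i ∈ s, x i ≠ 0
  · rw [logb_prod s x hx, mul_sum]
  · obtain ⟨i, hi, hxi⟩ : ∃ i ∈ s, x i = 0 := by simpa using hx
    simp [prod_eq_zero hi hxi]

lemma logb_mul_prod_div {ι : Type*} (s : Finset ι) {m : ℝ} {r : ι → ℝ} (hm : m ≠ 0)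
    (hr : ∀ i ∈ s, r i ≠ 0) :
    logb b (m * ∏ i ∈ s, r i / m) = logb b m + ∑ i ∈ s, (logb b (r i) - logb b m) := by
  have hrm : ∀ i ∈ s, r i / m ≠ 0 := fun i hi => div_ne_zero (hr i hi) hm
  rw [logb_mul hm (prod_ne_zero_iff.2 hrm), logb_prod s _ hrm]
  exact congrArg _ (sum_congr rfl fun i hi => logb_div (hr i hi) hm)

end Logb

lemma sum_mul_prod_div_eq_sum {ι B : Type*} [Fintype ι] [DecidableEq ι] {A : ι → Type*}
    [∀ i, Fintype (A i)] [Fintype B] (m : B → ℝ) (r : ∀ i, A i → B → ℝ)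
    (hr : ∀ i b, ∑ a, r i a b = m b) :
    ∑ z : (∀ i, A i) × B, m z.2 * ∏ i, (r i (z.1 i) z.2 / m z.2) = ∑ b, m b := by
  rw [Fintype.sum_prod_type, sum_comm]
  refine sum_congr rfl fun b _ => ?_
  dsimp only
  rw [← mul_sum, ← Fintype.prod_sum fun i a => r i a b / m b]
  simp_rw [← sum_div, hr]
  rcases eq_or_ne (m b) 0 with hb | hb <;> simp [hb]

section Entropy

variable {Ω : Type*} [MeasurableSpace Ω] {μ : Measure Ω}

lemma ent_def {S : Type*} [Fintype S] (X : Ω → S) :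
    ent μ X = ∑ s, -(μ.real (X ⁻¹' {s}) * logb 2 (μ.real (X ⁻¹' {s}))) := rfl

section Marginals

variable [IsFiniteMeasure μ] {S T : Type*}

lemma measureReal_comp_preimage_singleton_ne_zero (X : Ω → S) (f : S → T) {s : S}
    (hs : μ.real (X ⁻¹' {s}) ≠ 0) : μ.real ((fun ω => f (X ω)) ⁻¹' {f s}) ≠ 0 :=
  ((measureReal_nonneg.lt_of_ne' hs).trans_le
    (measureReal_mono fun _ (h : X _ = s) => congrArg f h)).ne'

variable [Fintype S] [MeasurableSpace S] [MeasurableSingletonClass S] {X : Ω → S}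

lemma sum_measureReal_preimage_singleton_eq_univ (hX : Measurable X) :
    ∑ s, μ.real (X ⁻¹' {s}) = μ.real Set.univ := by
  rw [sum_measureReal_preimage_singleton _ fun s _ => hX (measurableSet_singleton s)]
  simp

lemma measureReal_comp_preimage_singleton [DecidableEq T] (hX : Measurable X) (f : S → T)
    (t : T) :
    μ.real ((fun ω => f (X ω)) ⁻¹' {t}) = ∑ s with f s = t, μ.real (X ⁻¹' {s}) := by
  rw [← measureReal_biUnion_finset]
  · congr 1
    ext ω
    simp
  · exact fun s _ s' _ hss' => (Set.disjoint_singleton.2 hss').preimage X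
  · exact fun s _ => hX (measurableSet_singleton s)

lemma ent_eq_sum_of_comp [Fintype T] (hX : Measurable X) {Z : Ω → T} (f : S → T)
    (hZ : ∀ ω, f (X ω) = Z ω) :
    ent μ Z = ∑ s, -(μ.real (X ⁻¹' {s}) * logb 2 (μ.real (Z ⁻¹' {f s}))) := by
  classical
  obtain rfl : (fun ω => f (X ω)) = Z := funext hZ
  rw [ent_def, ← sum_fiberwise univ f]
  refine sum_congr rfl fun t _ => ?_
  calc _ = ∑ s with f s = t,
        -(μ.real (X ⁻¹' {s}) * logb 2 (μ.real ((fun ω => f (X ω)) ⁻¹' {t}))) := by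
        rw [sum_neg_distrib, ← sum_mul, ← measureReal_comp_preimage_singleton hX f t]
    _ = _ := sum_congr rfl fun s hs => by rw [(mem_filter.1 hs).2]

variable [Fintype T] [MeasurableSpace T] [MeasurableSingletonClass T] {Y : Ω → T}

lemma sum_measureReal_pair_preimage_singleton (hX : Measurable X) (hY : Measurable Y) (t : T) :
    ∑ s, μ.real ((fun ω => (X ω, Y ω)) ⁻¹' {(s, t)}) = μ.real (Y ⁻¹' {t}) := by
  classical
  rw [measureReal_comp_preimage_singleton (hX.prodMk hY) Prod.snd t, sum_filter,
    Fintype.sum_prod_type]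
  simp

lemma ent_pair_of_indepFun (hX : Measurable X) (hY : Measurable Y) (h : IndepFun X Y μ) :
    ent μ (fun ω => (X ω, Y ω)) = ent μ X + ent μ Y := by
  have hXY := hX.prodMk hY
  rw [ent_eq_sum_of_comp hXY Prod.fst (Z := X) fun _ => rfl,
    ent_eq_sum_of_comp hXY Prod.snd (Z := Y) fun _ => rfl, ← sum_add_distrib, ent_def]
  refine sum_congr rfl fun z _ => ?_
  have hmul : μ.real ((fun ω => (X ω, Y ω)) ⁻¹' {z}) =
      μ.real (X ⁻¹' {z.1}) * μ.real (Y ⁻¹' {z.2}) := by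
    rw [← Set.singleton_prod_singleton, Set.mk_preimage_prod, measureReal_def,
      h.measure_inter_preimage_eq_mul _ _ (measurableSet_singleton _) (measurableSet_singleton _),
      ENNReal.toReal_mul]
    rfl
  rw [hmul, mul_logb_mul_eq_add]
  ring

end Marginals

section Vector

variable [IsFiniteMeasure μ] {ι : Type*} [Fintype ι] [DecidableEq ι] {A : ι → Type*}
  [∀ i, Fintype (A i)] [∀ i, MeasurableSpace (A i)] [∀ i, MeasurableSingletonClass (A i)]
  {U : ∀ i, Ω → A i}

lemma ent_pi_of_iIndepFun (hU : ∀ i, Measurable (U i)) (h : iIndepFun U μ) :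
    ent μ (fun ω i => U i ω) = ∑ i, ent μ (U i) := by
  have hUv : Measurable (fun ω i => U i ω) := measurable_pi_lambda _ hU
  have hprod (u : ∀ i, A i) :
      μ.real ((fun ω i => U i ω) ⁻¹' {u}) = ∏ i, μ.real (U i ⁻¹' {u i}) := by
    have hpre : (fun ω i => U i ω) ⁻¹' {u} = ⋂ i, U i ⁻¹' {u i} := by
      ext ω
      simp [funext_iff]
    rw [hpre, measureReal_def, h.meas_iInter fun i => ⟨{u i}, measurableSet_singleton _, rfl⟩,
      ENNReal.toReal_prod]
    rfl
  rw [sum_congr rfl fun i _ => ent_eq_sum_of_comp hUv (Z := U i) (fun u => u i) fun _ => rfl,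
    sum_comm, ent_def]
  refine sum_congr rfl fun u _ => ?_
  simp only [sum_neg_distrib, hprod, ← prod_mul_logb_prod_eq_sum]

variable {B : Type*} [Fintype B] [MeasurableSpace B] [MeasurableSingletonClass B] {V : Ω → B}

lemma sum_mul_logb_condProd_le (hU : ∀ i, Measurable (U i)) (hV : Measurable V) :
    ∑ z : (∀ i, A i) × B, μ.real ((fun ω => ((fun i => U i ω), V ω)) ⁻¹' {z}) *
        logb 2 (μ.real (V ⁻¹' {z.2}) * ∏ i,
          μ.real ((fun ω => (U i ω, V ω)) ⁻¹' {(z.1 i, z.2)}) / μ.real (V ⁻¹' {z.2})) ≤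
      ∑ z, μ.real ((fun ω => ((fun i => U i ω), V ω)) ⁻¹' {z}) *
        logb 2 (μ.real ((fun ω => ((fun i => U i ω), V ω)) ⁻¹' {z})) := by
  have hZ : Measurable fun ω => ((fun i => U i ω), V ω) :=
    (measurable_pi_lambda _ hU).prodMk hV
  refine sum_mul_logb_le_sum_mul_logb one_lt_two (fun _ => measureReal_nonneg)
    (fun _ => ?_) (fun z hz => ?_) ?_
  · exact mul_nonneg measureReal_nonneg
      (prod_nonneg fun _ _ => div_nonneg measureReal_nonneg measureReal_nonneg)
  · have hV_ne := measureReal_comp_preimage_singleton_ne_zero _ Prod.snd hz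
    exact mul_ne_zero hV_ne (prod_ne_zero_iff.2 fun i _ => div_ne_zero
      (measureReal_comp_preimage_singleton_ne_zero _ (fun z => (z.1 i, z.2)) hz) hV_ne)
  · rw [sum_mul_prod_div_eq_sum _
        (fun i a v => μ.real ((fun ω => (U i ω, V ω)) ⁻¹' {(a, v)}))
        fun i v => sum_measureReal_pair_preimage_singleton (hU i) hV v,
      sum_measureReal_preimage_singleton_eq_univ hV,
      sum_measureReal_preimage_singleton_eq_univ hZ]

lemma condEnt_pi_le_sum (hU : ∀ i, Measurable (U i)) (hV : Measurable V) :
    condEnt μ (fun ω i => U i ω) V ≤ ∑ i, condEnt μ (U i) V := by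
  set Z : Ω → (∀ i, A i) × B := fun ω => ((fun i => U i ω), V ω)
  have hZ : Measurable Z := (measurable_pi_lambda _ hU).prodMk hV
  set p : (∀ i, A i) × B → ℝ := fun z => μ.real (Z ⁻¹' {z})
  set pV : B → ℝ := fun v => μ.real (V ⁻¹' {v})
  set pUV : ∀ i, A i × B → ℝ := fun i w => μ.real ((fun ω => (U i ω, V ω)) ⁻¹' {w})
  have hent_Z : ent μ Z = ∑ z, -(p z * logb 2 (p z)) := rfl
  have hent_V : ent μ V = ∑ z, -(p z * logb 2 (pV z.2)) :=
    ent_eq_sum_of_comp hZ Prod.snd fun _ => rfl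
  have hent_UV (i : ι) :
      ent μ (fun ω => (U i ω, V ω)) = ∑ z, -(p z * logb 2 (pUV i (z.1 i, z.2))) :=
    ent_eq_sum_of_comp hZ (fun z => (z.1 i, z.2)) fun _ => rfl
  have hgibbs : ∑ z, p z * logb 2 (pV z.2 * ∏ i, (pUV i (z.1 i, z.2) / pV z.2)) ≤
      ∑ z, p z * logb 2 (p z) :=
    sum_mul_logb_condProd_le hU hV
  have hlog (z) : p z * logb 2 (pV z.2 * ∏ i, (pUV i (z.1 i, z.2) / pV z.2)) =
      p z * logb 2 (pV z.2) +
        ∑ i, (p z * logb 2 (pUV i (z.1 i, z.2)) - p z * logb 2 (pV z.2)) := by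
    rcases eq_or_ne (p z) 0 with hz | hz
    · simp [hz]
    have hV_ne : pV z.2 ≠ 0 := measureReal_comp_preimage_singleton_ne_zero Z Prod.snd hz
    have hUV_ne (i : ι) : pUV i (z.1 i, z.2) ≠ 0 :=
      measureReal_comp_preimage_singleton_ne_zero Z (fun z => (z.1 i, z.2)) hz
    rw [logb_mul_prod_div _ hV_ne fun i _ => hUV_ne i, mul_add, mul_sum]
    simp only [mul_sub]
  simp only [condEnt, sum_sub_distrib]
  rw [hent_Z, hent_V, sum_congr rfl fun i _ => hent_UV i]
  simp only [hlog, sum_add_distrib, sum_sub_distrib, sum_neg_distrib] at hgibbs ⊢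
  rw [sum_comm, sum_comm (f := fun z (_ : ι) => p z * logb 2 (pV z.2))] at hgibbs
  linarith

end Vector

end Entropy

theorem condMutInf_single_letter_general {Ω A B G : Type*} [MeasurableSpace Ω]
    [Fintype A] [MeasurableSpace A] [MeasurableSingletonClass A]
    [Fintype B] [MeasurableSpace B] [MeasurableSingletonClass B]
    [Fintype G] [MeasurableSpace G] [MeasurableSingletonClass G]
    {N : ℕ} (μ : Measure Ω) [IsProbabilityMeasure μ]
    (U : Fin N → Ω → A) (W : Ω → B) (Yv : Ω → G)
    (hUmeas : ∀ i, Measurable (U i)) (hWmeas : Measurable W) (hYmeas : Measurable Yv)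
    (hindep : iIndepFun U μ)
    (hUY : IndepFun (fun ω i => U i ω) Yv μ) :
    ∑ i, mutInf μ (U i) (fun ω => (W ω, Yv ω)) ≤
      condMutInf μ (fun ω i => U i ω) W Yv := by
  have hsplit := ent_pair_of_indepFun (measurable_pi_lambda _ hUmeas) hYmeas hUY
  have hsubadd :=
    condEnt_pi_le_sum (μ := μ) (V := fun ω => (W ω, Yv ω)) hUmeas (hWmeas.prodMk hYmeas)
  simp only [condMutInf, condEnt, mutInf] at hsubadd ⊢
  rw [hsplit, ent_pi_of_iIndepFun hUmeas hindep]
  simp only [sum_sub_distrib, sum_add_distrib] at hsubadd ⊢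
  linarith

/-- Single-letterization of the compressibility converse:
I(Uᴺ; Wᵐ | Yⁿ) ≥ ∑ᵢ I(Uᵢ; (Wᵐ,Yⁿ)) when Uᴺ is i.i.d. and independent of Yⁿ. -/
theorem condMutInf_single_letter {Ω A B G : Type*} [MeasurableSpace Ω]
    [Fintype A] [MeasurableSpace A] [MeasurableSingletonClass A]
    [Fintype B] [MeasurableSpace B] [MeasurableSingletonClass B]
    [Fintype G] [MeasurableSpace G] [MeasurableSingletonClass G]
    {N : ℕ} (μ : Measure Ω) [IsProbabilityMeasure μ]
    (U : Fin N → Ω → A) (W : Ω → B) (Yv : Ω → G)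
    (hUmeas : ∀ i, Measurable (U i)) (hWmeas : Measurable W) (hYmeas : Measurable Yv)
    (hindep : iIndepFun U μ)
    (hid : ∀ i j, IdentDistrib (U i) (U j) μ μ)
    (hUY : IndepFun (fun ω i => U i ω) Yv μ) :
    ∑ i, mutInf μ (U i) (fun ω => (W ω, Yv ω)) ≤
      condMutInf μ (fun ω i => U i ω) W Yv :=
  condMutInf_single_letter_general μ U W Yv hUmeas hWmeas hYmeas hindep hUY
end
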